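/- Factorization of the prefactor C(Λ): for any N ≥ 2 and pairwise distinct λ_1, …, λ_N > 0, and any 1 ≤ r < s ≤ N, one has C(Λ) = (−1)^{r+s} · C(Λ_{r,s}) · (√(λ_r λ_s)/π) · ((λ_s + λ_r)/(λ_s − λ_r)) · ∏_{i∈{1,…,N}, i≠r,s} ((λ_r + λ_i)(λ_s + λ_i))/((λ_r − λ_i)(λ_s − λ_i)), where Λ_{r,s} is the (N−2)-tuple obtained from (λ_1, …, λ_N) by deleting the r-th and s-th entries. -/

import Mathlib

noncomputable section

/-- The `(N-2)`-tuple obtained from `lam` by deleting the `r`-th and `s`-th entries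
(keeping the order of the remaining entries). -/
def delTwo {N : ℕ} (lam : Fin N → ℝ) (r s : Fin N) (hrs : r ≠ s) : Fin (N - 2) → ℝ :=
  fun i => lam ((({r, s}ᶜ : Finset (Fin N)).orderIsoOfFin
    (by rw [Finset.card_compl, Finset.card_pair hrs, Fintype.card_fin]) i : Fin N))

/-- The Vandermonde product `Δ(λ) = ∏_{i<j} (λ_j − λ_i)`. -/
def vandermonde {N : ℕ} (lam : Fin N → ℝ) : ℝ :=
  ∏ i : Fin N, ∏ j ∈ Finset.Ioi i, (lam j - lam i)

/-- The constant
`C(Λ) = (−1)^{N(N−1)/2} √(∏_{1≤i,j≤N} (λ_i + λ_j)) / ((2π)^{N/2} Δ(λ))`,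
where the product runs over all ordered pairs `(i, j)` including `i = j`. -/
def Cconst {N : ℕ} (lam : Fin N → ℝ) : ℝ :=
  (-1 : ℝ) ^ (N * (N - 1) / 2) *
    Real.sqrt (∏ i : Fin N, ∏ j : Fin N, (lam i + lam j)) /
      ((2 * Real.pi) ^ ((N : ℝ) / 2) * vandermonde lam)

namespace CFaux

lemma negOnePow_mod (n : ℕ) : (-1:ℝ)^n = (-1)^(n % 2) := by
  conv_lhs => rw [← Nat.div_add_mod n 2]
  rw [pow_add, pow_mul]
  norm_num

lemma negOnePow_congr {a b : ℕ} (h : a % 2 = b % 2) : (-1:ℝ)^a = (-1)^b := by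
  rw [negOnePow_mod a, negOnePow_mod b, h]

lemma even_mul_pred (k : ℕ) : Even (k * (k-1)) := by
  rcases k with _ | m
  · simp
  · simpa [Nat.mul_comm] using (Nat.even_mul_succ_self m)

lemma tri_step {N : ℕ} (hN : 2 ≤ N) : N*(N-1) + 6 = (N-2)*(N-3) + 4*N := by
  rcases N with _|_|_|m
  · omega
  · omega
  · norm_num
  · show (m+3)*(m+2) + 6 = (m+1)*m + 4*(m+3)
    ring

lemma parity_main {N r s : ℕ} (hN : 2 ≤ N) (hrs : r < s) (hs : s < N) :
    (N*(N-1)/2) % 2 = ((N-2)*((N-2)-1)/2 + ((N-1-s) + ((N-1-r-1) + (r+s)))) % 2 := by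
  have h1 := tri_step hN
  obtain ⟨u, hu⟩ := even_mul_pred N
  obtain ⟨v, hv⟩ := even_mul_pred (N-2)
  have hv' : (N-2)*((N-2)-1) = v + v := hv
  have h3 : (N-2)*((N-2)-1) = (N-2)*(N-3) ∨ N = 2 := by
    rcases Nat.eq_or_lt_of_le hN with h|h
    · right; omega
    · left
      have h4 : (N-2)-1 = N-3 := by omega
      rw [h4]
  rcases h3 with h3|h3
  · rw [h3] at hv'; omega
  · subst h3; norm_num at hv' ⊢; omega

variable {N k : ℕ}

/-- Double product over a finset restricted to increasing pairs. -/
def W (lam : Fin N → ℝ) (T : Finset (Fin N)) : ℝ :=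
  ∏ i ∈ T, ∏ j ∈ T.filter (fun j => i < j), (lam j - lam i)

def Q (lam : Fin N → ℝ) (T : Finset (Fin N)) : ℝ :=
  ∏ i ∈ T, ∏ j ∈ T, (lam i + lam j)

lemma W_univ (lam : Fin N → ℝ) : vandermonde lam = W lam Finset.univ := by
  unfold vandermonde W
  refine Finset.prod_congr rfl fun i _ => Finset.prod_congr ?_ fun _ _ => rfl
  ext j; simp

lemma Q_erase (lam : Fin N → ℝ) (T : Finset (Fin N)) (a : Fin N) (ha : a ∈ T) :
    Q lam T = (lam a + lam a) * (∏ i ∈ T.erase a, (lam i + lam a)) *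
        (∏ j ∈ T.erase a, (lam a + lam j)) * Q lam (T.erase a) := by
  unfold Q
  rw [← Finset.mul_prod_erase T _ ha]
  have h1 : ∀ i ∈ T.erase a, (∏ j ∈ T, (lam i + lam j))
      = (lam i + lam a) * ∏ j ∈ T.erase a, (lam i + lam j) := fun i _ =>
    (Finset.mul_prod_erase T _ ha).symm
  rw [Finset.prod_congr rfl h1, Finset.prod_mul_distrib,
    ← Finset.mul_prod_erase T _ ha]
  ring

lemma W_erase (lam : Fin N → ℝ) (T : Finset (Fin N)) (a : Fin N) (ha : a ∈ T) :
    W lam T = (∏ j ∈ (T.erase a).filter (fun j => a < j), (lam j - lam a)) *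
        (∏ i ∈ (T.erase a).filter (fun i => i < a), (lam a - lam i)) *
        W lam (T.erase a) := by
  unfold W
  rw [← Finset.mul_prod_erase T _ ha]
  have hfa : T.filter (fun j => a < j) = (T.erase a).filter (fun j => a < j) := by
    ext j; simp only [Finset.mem_filter, Finset.mem_erase]
    exact ⟨fun ⟨h1, h2⟩ => ⟨⟨h2.ne', h1⟩, h2⟩, fun ⟨⟨_, h1⟩, h2⟩ => ⟨h1, h2⟩⟩
  rw [hfa]
  have h1 : ∀ i ∈ T.erase a, (∏ j ∈ T.filter (fun j => i < j), (lam j - lam i))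
      = (if i < a then lam a - lam i else 1) *
        ∏ j ∈ (T.erase a).filter (fun j => i < j), (lam j - lam i) := by
    intro i hi
    by_cases hia : i < a
    · rw [if_pos hia]
      have haf : a ∈ T.filter (fun j => i < j) := Finset.mem_filter.2 ⟨ha, hia⟩
      rw [← Finset.mul_prod_erase _ _ haf, Finset.filter_erase]
    · rw [if_neg hia, one_mul]
      refine Finset.prod_congr ?_ fun _ _ => rfl
      rw [Finset.filter_erase, Finset.erase_eq_of_notMem]
      simp only [Finset.mem_filter]; tauto
  rw [Finset.prod_congr rfl h1, Finset.prod_mul_distrib, ← Finset.prod_filter]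
  ring

section Reindex
variable (T : Finset (Fin N)) (hT : T.card = k)

lemma prod_reindex (f : Fin N → ℝ) :
    (∏ i : Fin k, f (T.orderIsoOfFin hT i : Fin N)) = ∏ x ∈ T, f x := by
  refine Finset.prod_nbij (fun i => (T.orderIsoOfFin hT i : Fin N)) ?_ ?_ ?_ ?_
  · intro i _; exact (T.orderIsoOfFin hT i).2
  · intro i _ j _ h
    exact (T.orderIsoOfFin hT).injective (Subtype.ext h)
  · intro x hx
    exact ⟨(T.orderIsoOfFin hT).symm ⟨x, hx⟩, Finset.mem_coe.2 (Finset.mem_univ _),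
      congrArg Subtype.val ((T.orderIsoOfFin hT).apply_symm_apply ⟨x, hx⟩)⟩
  · intro i _; rfl

lemma prod_reindex2 (f : Fin N → Fin N → ℝ) :
    (∏ i : Fin k, ∏ j : Fin k,
        f (T.orderIsoOfFin hT i : Fin N) (T.orderIsoOfFin hT j : Fin N))
      = ∏ x ∈ T, ∏ y ∈ T, f x y := by
  have hinner : ∀ i : Fin k,
      (∏ j : Fin k, f (T.orderIsoOfFin hT i : Fin N) (T.orderIsoOfFin hT j : Fin N))
        = (fun x => ∏ y ∈ T, f x y) (T.orderIsoOfFin hT i : Fin N) := fun i =>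
    prod_reindex T hT _
  rw [Finset.prod_congr rfl fun i _ => hinner i]
  exact prod_reindex T hT (fun x => ∏ y ∈ T, f x y)

lemma prod_reindex_Ioi (f : Fin N → Fin N → ℝ) :
    (∏ i : Fin k, ∏ j ∈ Finset.Ioi i,
        f (T.orderIsoOfFin hT i : Fin N) (T.orderIsoOfFin hT j : Fin N))
      = ∏ x ∈ T, ∏ y ∈ T.filter (fun y => x < y), f x y := by
  have hmono : StrictMono (fun i => (T.orderIsoOfFin hT i : Fin N)) := fun i j hij =>
    (T.orderIsoOfFin hT).lt_iff_lt.2 hij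
  have hsurj : ∀ y (hy : y ∈ T),
      (T.orderIsoOfFin hT ((T.orderIsoOfFin hT).symm ⟨y, hy⟩) : Fin N) = y := fun y hy =>
    congrArg Subtype.val ((T.orderIsoOfFin hT).apply_symm_apply ⟨y, hy⟩)
  have hinner : ∀ i : Fin k,
      (∏ j ∈ Finset.Ioi i, f (T.orderIsoOfFin hT i : Fin N) (T.orderIsoOfFin hT j : Fin N))
      = (fun x => ∏ y ∈ T.filter (fun y => x < y), f x y) (T.orderIsoOfFin hT i : Fin N) := by
    intro i
    refine Finset.prod_nbij (fun j => (T.orderIsoOfFin hT j : Fin N)) ?_ ?_ ?_ ?_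
    · intro j hj
      exact Finset.mem_coe.2 (Finset.mem_filter.2
        ⟨(T.orderIsoOfFin hT j).2, hmono (Finset.mem_Ioi.1 hj)⟩)
    · intro a _ b _ h; exact hmono.injective h
    · intro y hy
      have hy' := Finset.mem_filter.1 (Finset.mem_coe.1 hy)
      refine ⟨(T.orderIsoOfFin hT).symm ⟨y, hy'.1⟩, ?_, hsurj y hy'.1⟩
      refine Finset.mem_coe.2 (Finset.mem_Ioi.2 ?_)
      exact hmono.lt_iff_lt.1 (by rw [hsurj y hy'.1]; exact hy'.2)
    · intro j _; rfl
  rw [Finset.prod_congr rfl fun i _ => hinner i]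
  exact prod_reindex T hT (fun x => ∏ y ∈ T.filter (fun y => x < y), f x y)

end Reindex
end CFaux

open CFaux in
/-- factorization of the prefactor `C(Λ)`: for `N ≥ 2`, pairwise distinct
`λ_1, …, λ_N > 0` and `r < s`,
`C(Λ) = (−1)^{r+s} C(Λ_{r,s}) · (√(λ_r λ_s)/π) · ((λ_s+λ_r)/(λ_s−λ_r)) ·
   ∏_{i≠r,s} ((λ_r+λ_i)(λ_s+λ_i))/((λ_r−λ_i)(λ_s−λ_i))`.
(Here `r.val`, `s.val` are the 0-based positions, whose sum has the same parity as the sum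
of the 1-based positions used in the paper.) -/
theorem Cconst_factorization
    (N : ℕ) (hN : 2 ≤ N)
    (lam : Fin N → ℝ) (hpos : ∀ i, 0 < lam i) (hdist : Function.Injective lam)
    (r s : Fin N) (hrs : r < s) :
    Cconst lam
      = (-1 : ℝ) ^ (r.val + s.val) * Cconst (delTwo lam r s hrs.ne) *
          (Real.sqrt (lam r * lam s) / Real.pi) * ((lam s + lam r) / (lam s - lam r)) *
          ∏ i ∈ Finset.univ.filter (fun i => i ≠ r ∧ i ≠ s),
            (lam r + lam i) * (lam s + lam i) / ((lam r - lam i) * (lam s - lam i)) := by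
  classical
  have hcard : ({r,s}ᶜ : Finset (Fin N)).card = N - 2 := by
    rw [Finset.card_compl, Finset.card_pair hrs.ne, Fintype.card_fin]
  set T1 : Finset (Fin N) := Finset.univ.erase s with hT1def
  set T2 : Finset (Fin N) := T1.erase r with hT2def
  have hrT1 : r ∈ T1 := Finset.mem_erase.2 ⟨hrs.ne, Finset.mem_univ r⟩
  have hcomp : ({r,s}ᶜ : Finset (Fin N)) = T2 := by
    ext i
    simp only [Finset.mem_compl, Finset.mem_insert, Finset.mem_singleton, hT2def, hT1def,
      Finset.mem_erase, Finset.mem_univ, and_true]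
    tauto
  set μ := delTwo lam r s hrs.ne with hμdef
  have hμ : μ = fun i => lam (({r,s}ᶜ : Finset (Fin N)).orderIsoOfFin hcard i : Fin N) := rfl
  -- membership facts for T2
  have hT2mem : ∀ i ∈ T2, i ≠ r ∧ i ≠ s := by
    intro i hi
    have := Finset.mem_erase.1 hi
    have h2 := Finset.mem_erase.1 this.2
    exact ⟨this.1, h2.1⟩
  -- abbreviations
  set Pss := ∏ i ∈ T2, (lam s - lam i) with hPss
  set Prs := ∏ i ∈ T2, (lam r - lam i) with hPrs
  set Psa := ∏ i ∈ T2, (lam s + lam i) with hPsa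
  set Pra := ∏ i ∈ T2, (lam r + lam i) with hPra
  set a1 := Real.sqrt (lam r * lam s) with ha1
  set n1 := (T1.filter (fun j => s < j)).card with hn1def
  set n2 := (T2.filter (fun j => r < j)).card with hn2def
  -- Vandermonde factorization
  have flip : ∀ (U : Finset (Fin N)) (c : Fin N),
      (∏ j ∈ U.filter (fun j => c < j), (lam j - lam c))
        = (-1:ℝ)^(U.filter (fun j => c < j)).card *
          ∏ j ∈ U.filter (fun j => c < j), (lam c - lam j) := by
    intro U c
    rw [show (fun j => lam j - lam c) = fun j => (-1) * (lam c - lam j) by funext x; ring]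
    rw [Finset.prod_mul_distrib, Finset.prod_const]
  have hsplit : ∀ (U : Finset (Fin N)) (c : Fin N), c ∉ U →
      (∏ j ∈ U.filter (fun j => c < j), (lam c - lam j)) *
        (∏ j ∈ U.filter (fun j => j < c), (lam c - lam j)) = ∏ j ∈ U, (lam c - lam j) := by
    intro U c hc
    rw [← Finset.prod_filter_mul_prod_filter_not U (fun j => c < j)]
    congr 1
    apply Finset.prod_congr _ fun _ _ => rfl
    ext j
    simp only [Finset.mem_filter, not_lt]
    constructor
    · rintro ⟨h1, h2⟩; exact ⟨h1, h2.le⟩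
    · rintro ⟨h1, h2⟩; exact ⟨h1, lt_of_le_of_ne h2 (fun h => hc (h ▸ h1))⟩
  have hWT2 : W lam T2 = vandermonde μ := by
    rw [hμ]
    show W lam T2 = ∏ i : Fin (N-2), ∏ j ∈ Finset.Ioi i,
      (lam (({r,s}ᶜ : Finset (Fin N)).orderIsoOfFin hcard j : Fin N) -
        lam (({r,s}ᶜ : Finset (Fin N)).orderIsoOfFin hcard i : Fin N))
    rw [prod_reindex_Ioi ({r,s}ᶜ : Finset (Fin N)) hcard (fun x y => lam y - lam x), hcomp]
    rfl
  have hV : vandermonde lam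
      = (-1:ℝ)^n1 * ((lam s - lam r) * Pss) * ((-1:ℝ)^n2 * Prs) * vandermonde μ := by
    rw [W_univ lam, W_erase lam Finset.univ s (Finset.mem_univ s)]
    rw [show Finset.univ.erase s = T1 from rfl]
    rw [W_erase lam T1 r hrT1]
    rw [show T1.erase r = T2 from rfl]
    rw [flip T1 s, flip T2 r, hWT2]
    have e1 : (-1:ℝ)^n1 * (∏ j ∈ T1.filter (fun j => s < j), (lam s - lam j)) *
        (∏ j ∈ T1.filter (fun j => j < s), (lam s - lam j))
        = (-1:ℝ)^n1 * ((lam s - lam r) * Pss) := by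
      rw [mul_assoc, hsplit T1 s (fun h => (Finset.mem_erase.1 h).1 rfl)]
      rw [← Finset.mul_prod_erase T1 _ hrT1]
    have e2 : (-1:ℝ)^n2 * (∏ j ∈ T2.filter (fun j => r < j), (lam r - lam j)) *
        (∏ j ∈ T2.filter (fun j => j < r), (lam r - lam j))
        = (-1:ℝ)^n2 * Prs := by
      rw [mul_assoc, hsplit T2 r (fun h => (Finset.mem_erase.1 h).1 rfl)]
    calc (-1:ℝ)^n1 * (∏ j ∈ T1.filter (fun j => s < j), (lam s - lam j)) *
          (∏ j ∈ T1.filter (fun j => j < s), (lam s - lam j)) *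
          ((-1:ℝ)^n2 * (∏ j ∈ T2.filter (fun j => r < j), (lam r - lam j)) *
            (∏ j ∈ T2.filter (fun j => j < r), (lam r - lam j)) * vandermonde μ)
        = ((-1:ℝ)^n1 * (∏ j ∈ T1.filter (fun j => s < j), (lam s - lam j)) *
          (∏ j ∈ T1.filter (fun j => j < s), (lam s - lam j))) *
          (((-1:ℝ)^n2 * (∏ j ∈ T2.filter (fun j => r < j), (lam r - lam j)) *
            (∏ j ∈ T2.filter (fun j => j < r), (lam r - lam j))) * vandermonde μ) := by ring
      _ = _ := by rw [e1, e2]; ring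
  -- Q factorization
  have hQT2 : Q lam T2 = ∏ i : Fin (N-2), ∏ j : Fin (N-2), (μ i + μ j) := by
    rw [hμ]
    rw [show (∏ i : Fin (N-2), ∏ j : Fin (N-2),
        (lam (({r,s}ᶜ : Finset (Fin N)).orderIsoOfFin hcard i : Fin N) +
          lam (({r,s}ᶜ : Finset (Fin N)).orderIsoOfFin hcard j : Fin N)))
      = ∏ x ∈ ({r,s}ᶜ : Finset (Fin N)), ∏ y ∈ ({r,s}ᶜ : Finset (Fin N)), (lam x + lam y)
      from prod_reindex2 ({r,s}ᶜ : Finset (Fin N)) hcard (fun x y => lam x + lam y), hcomp]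
    rfl
  have c1 : ∏ i ∈ T1, (lam i + lam s) = (lam s + lam r) * Psa := by
    rw [Finset.prod_congr rfl fun i _ => add_comm (lam i) (lam s)]
    exact (Finset.mul_prod_erase T1 _ hrT1).symm
  have c2 : ∏ j ∈ T1, (lam s + lam j) = (lam s + lam r) * Psa :=
    (Finset.mul_prod_erase T1 _ hrT1).symm
  have c3 : ∏ i ∈ T2, (lam i + lam r) = Pra :=
    Finset.prod_congr rfl fun i _ => add_comm _ _
  have hQu : (∏ i : Fin N, ∏ j : Fin N, (lam i + lam j))
      = (lam s + lam s) * ((lam s + lam r) * Psa) * ((lam s + lam r) * Psa) *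
        ((lam r + lam r) * Pra * Pra *
          (∏ i : Fin (N-2), ∏ j : Fin (N-2), (μ i + μ j))) := by
    rw [show (∏ i : Fin N, ∏ j : Fin N, (lam i + lam j)) = Q lam Finset.univ from rfl]
    rw [Q_erase lam Finset.univ s (Finset.mem_univ s),
      show Finset.univ.erase s = T1 from rfl, c1, c2,
      Q_erase lam T1 r hrT1, show T1.erase r = T2 from rfl, c3, hQT2]
  -- positivity facts
  have hPsapos : 0 < Psa := Finset.prod_pos fun i _ => by
    have := hpos s; have := hpos i; linarith
  have hPrapos : 0 < Pra := Finset.prod_pos fun i _ => by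
    have := hpos r; have := hpos i; linarith
  have ha1pos : 0 < lam r * lam s := mul_pos (hpos r) (hpos s)
  set x := 2 * a1 * (lam s + lam r) * Psa * Pra with hx
  have hxnn : 0 ≤ x := by
    have h1 : (0:ℝ) ≤ 2 * a1 := by positivity
    have h2 : (0:ℝ) < lam s + lam r := by have := hpos s; have := hpos r; linarith
    have := mul_nonneg (mul_nonneg (mul_nonneg h1 h2.le) hPsapos.le) hPrapos.le
    linarith [this]
  have ha1sq : a1^2 = lam r * lam s := Real.sq_sqrt ha1pos.le
  have hQux : (∏ i : Fin N, ∏ j : Fin N, (lam i + lam j))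
      = x^2 * (∏ i : Fin (N-2), ∏ j : Fin (N-2), (μ i + μ j)) := by
    rw [hQu, hx]
    linear_combination (-(4:ℝ) * (lam s + lam r)^2 * Psa^2 * Pra^2 *
      (∏ i : Fin (N-2), ∏ j : Fin (N-2), (μ i + μ j))) * ha1sq
  have hsqrt : Real.sqrt (∏ i : Fin N, ∏ j : Fin N, (lam i + lam j))
      = x * Real.sqrt (∏ i : Fin (N-2), ∏ j : Fin (N-2), (μ i + μ j)) := by
    rw [hQux, Real.sqrt_mul (sq_nonneg x), Real.sqrt_sq hxnn]
  -- rpow split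
  have hDN : (2 * Real.pi) ^ ((N : ℝ) / 2)
      = (2 * Real.pi) * (2 * Real.pi) ^ (((N - 2 : ℕ) : ℝ) / 2) := by
    have h2 : ((N - 2 : ℕ) : ℝ) = (N : ℝ) - 2 := by
      push_cast [Nat.cast_sub hN]; ring
    have hb : (0:ℝ) < 2 * Real.pi := by positivity
    rw [h2, show (N : ℝ) / 2 = ((N:ℝ) - 2)/2 + 1 by ring, Real.rpow_add hb, Real.rpow_one]
    ring
  -- sign identity
  have hn1 : n1 = N - 1 - s.val := by
    rw [hn1def, show T1.filter (fun j => s < j) = Finset.Ioi s by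
      ext j
      simp only [Finset.mem_filter, hT1def, Finset.mem_erase, Finset.mem_univ, and_true,
        Finset.mem_Ioi]
      exact ⟨fun h => h.2, fun h => ⟨h.ne', h⟩⟩]
    rw [Fin.card_Ioi]
  have hn2 : n2 = N - 1 - r.val - 1 := by
    rw [hn2def, show T2.filter (fun j => r < j) = (Finset.Ioi r).erase s by
      ext j
      simp only [Finset.mem_filter, hT2def, hT1def, Finset.mem_erase, Finset.mem_univ,
        and_true, Finset.mem_Ioi]
      constructor
      · rintro ⟨⟨h1, h2⟩, h3⟩; exact ⟨h2, h3⟩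
      · rintro ⟨h1, h2⟩; exact ⟨⟨ne_of_gt h2, h1⟩, h2⟩]
    rw [Finset.card_erase_of_mem (Finset.mem_Ioi.2 hrs), Fin.card_Ioi]
  have hsign : (-1:ℝ)^(N*(N-1)/2)
      = (-1:ℝ)^((N-2)*((N-2)-1)/2) * ((-1:ℝ)^n1 * ((-1:ℝ)^n2 * (-1:ℝ)^(r.val + s.val))) := by
    rw [← pow_add, ← pow_add, ← pow_add]
    exact negOnePow_congr (by rw [hn1, hn2]; exact parity_main hN hrs s.isLt)
  -- nonvanishing facts
  have hne : ∀ i j : Fin N, i ≠ j → lam i - lam j ≠ 0 := fun i j h =>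
    sub_ne_zero.2 (fun hh => h (hdist hh))
  have hPssne : Pss ≠ 0 := Finset.prod_ne_zero_iff.2 fun i hi =>
    hne s i (hT2mem i hi).2.symm
  have hPrsne : Prs ≠ 0 := Finset.prod_ne_zero_iff.2 fun i hi =>
    hne r i (hT2mem i hi).1.symm
  have hVμne : vandermonde μ ≠ 0 := by
    rw [← hWT2]
    unfold W
    refine Finset.prod_ne_zero_iff.2 fun i _ => Finset.prod_ne_zero_iff.2 fun j hj => ?_
    exact hne j i (ne_of_gt (Finset.mem_filter.1 hj).2)
  have hD'pos : (0:ℝ) < (2 * Real.pi) ^ (((N - 2 : ℕ) : ℝ) / 2) :=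
    Real.rpow_pos_of_pos (by positivity) _
  have hsrne : lam s - lam r ≠ 0 := hne s r hrs.ne'
  have hπ : Real.pi ≠ 0 := Real.pi_ne_zero
  -- target product rewrite
  have hfilter : Finset.univ.filter (fun i => i ≠ r ∧ i ≠ s) = T2 := by
    ext i
    simp only [Finset.mem_filter, Finset.mem_univ, true_and, hT2def, hT1def,
      Finset.mem_erase, and_true]
  have hR : (∏ i ∈ Finset.univ.filter (fun i => i ≠ r ∧ i ≠ s),
        (lam r + lam i) * (lam s + lam i) / ((lam r - lam i) * (lam s - lam i)))
      = (Pra * Psa) / (Prs * Pss) := by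
    rw [hfilter, Finset.prod_div_distrib, Finset.prod_mul_distrib, Finset.prod_mul_distrib]
  -- assemble
  rw [hR]
  unfold Cconst
  rw [hsqrt, hDN, hV, hsign]
  have hsign2 : ((-1:ℝ)^n1) * ((-1:ℝ)^n1) = 1 := by
    rw [← pow_add]; exact Even.neg_one_pow ⟨n1, rfl⟩
  field_simp
  ring_nf
  rw [hx]
  ring
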